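/- arXiv:1505.00731 — 2 statements merged into one kernel-verified Lean document; each statement's English description precedes it below -/
import Mathlib

section
/- Let U be an optimal machine. For every rational ε > 0 there exists a partial computable function A : List Bool →. Bool such that liminf_{n→∞} ε_n(A) ≤ ε. -/
open Filter

/-- Kolmogorov complexity of `m` relative to machine `U` (∞ if `m` has no description). -/
noncomputable def KU (U : List Bool →. ℕ) (m : ℕ) : ℕ∞ :=
  sInf {l : ℕ∞ | ∃ p : List Bool, m ∈ U p ∧ (p.length : ℕ∞) = l}

/-- `U` is an optimal machine. -/
def OptimalMachine (U : List Bool →. ℕ) : Prop :=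
  Partrec U ∧ ∀ V : List Bool →. ℕ, Partrec V → ∃ c : ℕ, ∀ m, KU U m ≤ KU V m + (c : ℕ∞)

/-- A total function on strings is length-bounded if it increases length by at most a constant. -/
def LengthBounded (h : List Bool → List Bool) : Prop :=
  ∃ c : ℕ, ∀ x, (h x).length ≤ x.length + c

/-- `U` is an effectively optimal machine. -/
def EffOptimal (U : List Bool →. ℕ) : Prop :=
  Partrec U ∧ ∀ V : List Bool →. ℕ, Partrec V →
    ∃ h : List Bool → List Bool, Computable h ∧ LengthBounded h ∧ ∀ x, U (h x) = V x

/-- `x` is an error point of `A` as an approximate decision procedure for `dom U`. -/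
def ErrorPoint (U : List Bool →. ℕ) (A : List Bool →. Bool) (x : List Bool) : Prop :=
  ¬(((U x).Dom ∧ true ∈ A x) ∨ (¬(U x).Dom ∧ false ∈ A x))

/-- fraction of error points among strings of length at most `n`. -/
noncomputable def errRate (U : List Bool →. ℕ) (A : List Bool →. Bool) (n : ℕ) : ℝ :=
  (Set.ncard {x : List Bool | x.length ≤ n ∧ ErrorPoint U A x} : ℝ) / 2 ^ (n + 1)

def LeftTotal (U : List Bool →. ℕ) : Prop :=
  ∀ x y : List Bool, x.length = y.length → List.Lex (· < ·) x y → (U y).Dom → (U x).Dom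

noncomputable def haltRate (U : List Bool →. ℕ) (n : ℕ) : ℝ :=
  (Set.ncard {x : List Bool | x.length ≤ n ∧ (U x).Dom} : ℝ) / 2 ^ (n + 1)

def MOptimal (S : Set (List Bool)) : Prop :=
  REPred (· ∈ S) ∧ ∀ W : Set (List Bool), REPred (· ∈ W) →
    ∃ h : List Bool → List Bool, Computable h ∧ LengthBounded h ∧ ∀ x, x ∈ W ↔ h x ∈ S

def SimpleSet (S : Set (List Bool)) : Prop :=
  REPred (· ∈ S) ∧ Sᶜ.Infinite ∧
    ∀ W : Set (List Bool), REPred (· ∈ W) → W ⊆ Sᶜ → W.Finite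

noncomputable def compTime (c : Nat.Partrec.Code) (p : List Bool) : ℕ :=
  sInf {k : ℕ | (Nat.Partrec.Code.evaln k c (Encodable.encode p)).isSome}

noncomputable def BB (U : List Bool →. ℕ) (c : Nat.Partrec.Code) (n : ℕ) : ℕ :=
  sSup {t : ℕ | ∃ p : List Bool, p.length ≤ n ∧ (U p).Dom ∧ t = compTime c p}

noncomputable def Bfun (U : List Bool →. ℕ) (n : ℕ) : ℕ :=
  sSup {m : ℕ | KU U m ≤ (n : ℕ∞)}

/-!
Write `D n` for the set of strings of length at most `n` on which `U` halts. Pick a rational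
`r ≥ 0` slightly below `liminf |D n| / 2 ^ (n + 1)` (or `r = 0`), so that `|D j| ≥ r 2 ^ (j + 1)`
for all `j ≥ N`, while `|D m| < (r + ε / 2) 2 ^ (m + 1)` for infinitely many `m`.
On input `x`, run `U` on all short strings in parallel until a stage `k` at which, at every
level `N ≤ j < |x| + t`, at least `r 2 ^ (j + 1)` strings of length `≤ j` have halted, and answer
whether `x` has halted by stage `k`. The stage found grows with `|x|`. At a good level `m = s + t`,
an input of length in `(s, m]` is therefore decided at a stage by which at least `r 2 ^ (m + 1)`
elements of `D m` have halted, so it can only be wrong if it lies in the remaining fewer than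
`(ε / 2) 2 ^ (m + 1)` elements of `D m`; the inputs of length `≤ s` are fewer than `2 ^ (-t)`
of all inputs of length `≤ m`.
-/

theorem exists_nnrat_eventually_le_frequently_lt {ι : Type*} {f : Filter ι} [f.NeBot]
    {u : ι → ℝ} (h0 : ∀ i, 0 ≤ u i) (hbdd : f.IsBoundedUnder (· ≤ ·) u) {δ : ℝ} (hδ : 0 < δ) :
    ∃ r : ℚ≥0, (∀ᶠ i in f, (r : ℝ) ≤ u i) ∧ ∃ᶠ i in f, u i < r + δ := by
  obtain ⟨q, hq_gt, hq_lt⟩ := exists_rat_btwn (sub_lt_self (liminf u f) hδ)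
  have hcast : ((q.toNNRat : ℚ≥0) : ℝ) = max (q : ℝ) 0 := by
    rw [← Rat.cast_nnratCast]; simp [Rat.toNNRat]
  refine ⟨q.toNNRat, ?_, ?_⟩ <;> rw [hcast]
  · filter_upwards [eventually_lt_of_lt_liminf hq_lt (isBoundedUnder_of ⟨0, h0⟩)] with i hi
    exact max_le hi.le (h0 i)
  · exact frequently_lt_of_liminf_lt hbdd.isCoboundedUnder_ge
      (by linarith [le_max_left (q : ℝ) 0])

theorem NNRat.num_mul_le_den_mul_iff (r : ℚ≥0) {a : ℕ} (ha : 0 < a) (M : ℕ) :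
    r.num * a ≤ r.den * M ↔ (r : ℝ) ≤ M / a := by
  rw [NNRat.cast_def, div_le_div_iff₀ (by positivity) (by positivity)]
  norm_cast
  rw [mul_comm M]

namespace ErrorRate

open Nat.Partrec Nat.Partrec.Code Encodable

def stringsUpTo : ℕ → List (List Bool)
  | 0 => [[]]
  | n + 1 => [] :: ((stringsUpTo n).map (true :: ·) ++ (stringsUpTo n).map (false :: ·))

theorem mem_stringsUpTo {n : ℕ} {x : List Bool} : x ∈ stringsUpTo n ↔ x.length ≤ n := by
  induction n generalizing x with
  | zero => cases x <;> simp [stringsUpTo]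
  | succ n ih => cases x with
    | nil => simp [stringsUpTo]
    | cons b y => cases b <;> simp [stringsUpTo, ih]

theorem nodup_stringsUpTo (n : ℕ) : (stringsUpTo n).Nodup := by
  induction n with
  | zero => simp [stringsUpTo]
  | succ n ih =>
    refine List.nodup_cons.2 ⟨by simp, (ih.map ?_).append (ih.map ?_) ?_⟩
    · exact fun _ _ h => List.cons_injective h
    · exact fun _ _ h => List.cons_injective h
    · simp [List.disjoint_left]

theorem length_stringsUpTo (n : ℕ) : (stringsUpTo n).length + 1 = 2 ^ (n + 1) := by
  induction n with
  | zero => simp [stringsUpTo]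
  | succ n ih =>
    simp only [stringsUpTo, List.length_cons, List.length_append, List.length_map]
    omega

theorem primrec_stringsUpTo : Primrec stringsUpTo := by
  have hcons (b : Bool) : Primrec₂ fun (_ : ℕ × List (List Bool)) (x : List Bool) => b :: x :=
    (Primrec.list_cons.comp (Primrec.const b) Primrec.snd).to₂
  have hstep : Primrec₂ fun (_ : ℕ) (l : List (List Bool)) =>
      ([] : List Bool) :: (l.map (true :: ·) ++ l.map (false :: ·)) :=
    (Primrec.list_cons.comp (Primrec.const []) (Primrec.list_append.comp
      (Primrec.list_map Primrec.snd (hcons true)) (Primrec.list_map Primrec.snd (hcons false)))).to₂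
  refine (Primrec.nat_rec₁ [[]] hstep).of_eq fun n => ?_
  induction n with
  | zero => rfl
  | succ n ih => simp [stringsUpTo, ← ih]

theorem setOf_length_le_and_eq_filter (P : List Bool → Prop) [DecidablePred P] (n : ℕ) :
    {x : List Bool | x.length ≤ n ∧ P x} = ↑((stringsUpTo n).toFinset.filter P) := by
  ext x
  simp [mem_stringsUpTo]

theorem ncard_length_le_and_lt (P : List Bool → Prop) (n : ℕ) :
    {x : List Bool | x.length ≤ n ∧ P x}.ncard < 2 ^ (n + 1) := by
  classical
  rw [setOf_length_le_and_eq_filter, Set.ncard_coe_finset]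
  calc _ ≤ (stringsUpTo n).toFinset.card := Finset.card_filter_le _ _
    _ ≤ (stringsUpTo n).length := List.toFinset_card_le _
    _ < 2 ^ (n + 1) := by have := length_stringsUpTo n; omega

def IsCodeFor (c : Code) (U : List Bool →. ℕ) : Prop :=
  eval c = fun n => Part.bind (decode (α := List Bool) n) fun x => (U x).map encode

def haltsWithin (c : Code) (k : ℕ) (x : List Bool) : Bool :=
  (evaln k c (encode x)).isSome

theorem haltsWithin_mono {c : Code} {k k' : ℕ} {x : List Bool} (hk : k ≤ k')
    (h : haltsWithin c k x) : haltsWithin c k' x := by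
  obtain ⟨v, hv⟩ := Option.isSome_iff_exists.1 h
  exact Option.isSome_iff_exists.2 ⟨v, evaln_mono hk hv⟩

theorem primrec₂_haltsWithin (c : Code) : Primrec₂ (haltsWithin c) :=
  (Primrec.option_isSome.comp (primrec_evaln.comp
    ((Primrec.fst.pair (Primrec.const c)).pair (Primrec.encode.comp Primrec.snd)))).to₂

def numHaltsWithin (c : Code) (k n : ℕ) : ℕ :=
  ((stringsUpTo n).filter (haltsWithin c k)).length

theorem primrec₂_numHaltsWithin (c : Code) : Primrec₂ (numHaltsWithin c) := by
  have hfilter := PrimrecRel.listFilter (R := fun x k => haltsWithin c k x = true)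
    (Primrec.eq.comp₂ (primrec₂_haltsWithin c).swap (Primrec₂.const true))
  exact (Primrec.list_length.comp (hfilter.comp (primrec_stringsUpTo.comp Primrec.snd)
    Primrec.fst)).to₂.of_eq fun _ _ => by simp [numHaltsWithin]

theorem numHaltsWithin_eq_card (c : Code) (k n : ℕ) :
    numHaltsWithin c k n = ((stringsUpTo n).toFinset.filter (haltsWithin c k ·)).card := by
  rw [numHaltsWithin, ← List.toFinset_filter,
    List.toFinset_card_of_nodup ((nodup_stringsUpTo n).filter _)]

section Machine

variable {U : List Bool →. ℕ} {c : Code}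

theorem dom_of_haltsWithin (hc : IsCodeFor c U) {k : ℕ} {x : List Bool}
    (h : haltsWithin c k x) : (U x).Dom := by
  unfold IsCodeFor at hc
  obtain ⟨v, hv⟩ := Option.isSome_iff_exists.1 h
  have hv : v ∈ eval c (encode x) := evaln_sound hv
  simp only [hc, encodek, Part.coe_some, Part.bind_some] at hv
  obtain ⟨y, hy, -⟩ := (Part.mem_map_iff _).1 hv
  exact Part.dom_iff_mem.2 ⟨y, hy⟩

theorem exists_haltsWithin (hc : IsCodeFor c U) {x : List Bool} (h : (U x).Dom) :
    ∃ k, haltsWithin c k x := by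
  unfold IsCodeFor at hc
  have hx : encode ((U x).get h) ∈ eval c (encode x) := by
    simp only [hc, encodek, Part.coe_some, Part.bind_some]
    exact Part.mem_map _ (Part.get_mem h)
  obtain ⟨k, hk⟩ := evaln_complete.1 hx
  exact ⟨k, Option.isSome_iff_exists.2 ⟨_, hk⟩⟩

theorem exists_haltsWithin_forall_mem (hc : IsCodeFor c U) (s : Finset (List Bool)) :
    ∃ k, ∀ x ∈ s, (U x).Dom → haltsWithin c k x := by
  choose! K hK using fun x (h : (U x).Dom) => exists_haltsWithin hc h
  exact ⟨s.sup K, fun x hx hd => haltsWithin_mono (Finset.le_sup hx) (hK x hd)⟩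

theorem ncard_dom_not_haltsWithin_add (hc : IsCodeFor c U) (k n : ℕ) :
    {x : List Bool | x.length ≤ n ∧ (U x).Dom ∧ haltsWithin c k x = false}.ncard
      + numHaltsWithin c k n = {x : List Bool | x.length ≤ n ∧ (U x).Dom}.ncard := by
  classical
  simp only [setOf_length_le_and_eq_filter, Set.ncard_coe_finset, numHaltsWithin_eq_card]
  rw [← Finset.card_filter_add_card_filter_not
    (s := (stringsUpTo n).toFinset.filter fun x => (U x).Dom) (haltsWithin c k ·), add_comm,
    Finset.filter_filter, Finset.filter_filter]
  congr 3
  · ext x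
    exact ⟨fun h => ⟨dom_of_haltsWithin hc h, h⟩, And.right⟩
  · ext x
    simp only [Bool.not_eq_true]

end Machine

section Decider

variable (c : Code) (r : ℚ≥0) (N t : ℕ)

def ThresholdMet (n k : ℕ) : Prop :=
  ∀ j < n + t, N ≤ j → r.num * 2 ^ (j + 1) ≤ r.den * numHaltsWithin c k j

instance : DecidableRel (ThresholdMet c r N t) := fun _ _ => by
  unfold ThresholdMet; infer_instance

def approxDecider : List Bool →. Bool := fun x =>
  (Nat.rfind fun k => Part.some (decide (ThresholdMet c r N t x.length k))).map
    fun k => haltsWithin c k x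

theorem primrecRel_thresholdMet : PrimrecRel (ThresholdMet c r N t) := by
  have hpow : Primrec₂ ((· ^ ·) : ℕ → ℕ → ℕ) := Primrec₂.unpaired'.1 Nat.Primrec.pow
  have hlevel : PrimrecRel fun j k =>
      N ≤ j → r.num * 2 ^ (j + 1) ≤ r.den * numHaltsWithin c k j :=
    (PrimrecPred.or (Primrec.nat_le.comp (Primrec.const N) Primrec.fst).not
      (Primrec.nat_le.comp
        (Primrec.nat_mul.comp (Primrec.const _)
          (hpow.comp (Primrec.const 2) (Primrec.succ.comp Primrec.fst)))
        (Primrec.nat_mul.comp (Primrec.const _)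
          ((primrec₂_numHaltsWithin c).comp Primrec.snd Primrec.fst)))).of_eq
      fun _ => imp_iff_not_or.symm
  exact (hlevel.forall_lt.comp₂ ((Primrec.nat_add.comp Primrec.fst (Primrec.const t)).to₂)
    Primrec₂.right).of_eq fun _ _ => Iff.rfl

theorem partrec_approxDecider : Partrec (approxDecider c r N t) := by
  have hcond : Computable₂ fun (x : List Bool) k => decide (ThresholdMet c r N t x.length k) :=
    ((primrecRel_thresholdMet c r N t).decide.comp
      (Primrec.list_length.comp Primrec.fst) Primrec.snd).to_comp
  exact (Partrec.rfind hcond.partrec₂).map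
    ((primrec₂_haltsWithin c).comp Primrec.snd Primrec.fst).to_comp

variable {c r N t}

theorem ThresholdMet.of_le {n n' k : ℕ} (hn : n ≤ n') (h : ThresholdMet c r N t n' k) :
    ThresholdMet c r N t n k :=
  fun j hj => h j (by omega)

theorem mem_approxDecider {x : List Bool} (h : ∃ k, ThresholdMet c r N t x.length k) :
    haltsWithin c (Nat.find h) x ∈ approxDecider c r N t x :=
  Part.mem_map _ <| Nat.mem_rfind.2
    ⟨by simpa using Nat.find_spec h, fun hm => by simpa using Nat.find_min h hm⟩

end Decider

theorem haltRate_nonneg (U : List Bool →. ℕ) (n : ℕ) : 0 ≤ haltRate U n := by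
  unfold haltRate; positivity

theorem haltRate_le_one (U : List Bool →. ℕ) (n : ℕ) : haltRate U n ≤ 1 := by
  rw [haltRate, div_le_one (by positivity)]
  exact_mod_cast (ncard_length_le_and_lt _ n).le

theorem errRate_nonneg (U : List Bool →. ℕ) (A : List Bool →. Bool) (n : ℕ) :
    0 ≤ errRate U A n := by
  unfold errRate; positivity

section Counting

variable {U : List Bool →. ℕ} {c : Code} {r : ℚ≥0} {N t : ℕ}

theorem exists_thresholdMet (hc : IsCodeFor c U) (hr : ∀ j ≥ N, (r : ℝ) ≤ haltRate U j)
    (n : ℕ) :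
    ∃ k, ThresholdMet c r N t n k := by
  obtain ⟨k, hk⟩ := exists_haltsWithin_forall_mem hc (stringsUpTo (n + t)).toFinset
  refine ⟨k, fun j hj hNj => ?_⟩
  have hnone : {x : List Bool | x.length ≤ j ∧ (U x).Dom ∧ haltsWithin c k x = false} = ∅ := by
    refine Set.eq_empty_of_forall_notMem fun x ⟨hlen, hdom, hfalse⟩ => ?_
    have := hk x (List.mem_toFinset.2 (mem_stringsUpTo.2 (by omega))) hdom
    rw [hfalse] at this
    contradiction
  have hcount := ncard_dom_not_haltsWithin_add hc k j
  rw [hnone, Set.ncard_empty, zero_add] at hcount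
  rw [hcount, NNRat.num_mul_le_den_mul_iff r (by positivity)]
  simpa [haltRate] using hr j hNj

theorem ncard_errorPoint_add_lt (hc : IsCodeFor c U)
    (hex : ∀ n, ∃ k, ThresholdMet c r N t n k) (s : ℕ) :
    {x | x.length ≤ s + t ∧ ErrorPoint U (approxDecider c r N t) x}.ncard
      + numHaltsWithin c (Nat.find (hex (s + 1))) (s + t)
      < 2 ^ (s + 1) + {x : List Bool | x.length ≤ s + t ∧ (U x).Dom}.ncard := by
  set K := Nat.find (hex (s + 1))
  have hsub : {x | x.length ≤ s + t ∧ ErrorPoint U (approxDecider c r N t) x} ⊆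
      {x | x.length ≤ s ∧ ErrorPoint U (approxDecider c r N t) x} ∪
        {x | x.length ≤ s + t ∧ (U x).Dom ∧ haltsWithin c K x = false} := by
    rintro x ⟨hlen, herr⟩
    by_cases hs : x.length ≤ s
    · exact Or.inl ⟨hs, herr⟩
    have hmem := mem_approxDecider (hex x.length)
    have hK : K ≤ Nat.find (hex x.length) := Nat.find_mono fun k => ThresholdMet.of_le (by omega)
    cases hx : haltsWithin c (Nat.find (hex x.length)) x
    · have hdom : (U x).Dom := by_contra fun hd => herr (Or.inr ⟨hd, hx ▸ hmem⟩)
      refine Or.inr ⟨hlen, hdom, Bool.eq_false_iff.2 fun hKx => ?_⟩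
      simp [haltsWithin_mono hK hKx] at hx
    · exact (herr (Or.inl ⟨dom_of_haltsWithin hc hx, hx ▸ hmem⟩)).elim
  have hfin : ({x | x.length ≤ s ∧ ErrorPoint U (approxDecider c r N t) x} ∪
      {x | x.length ≤ s + t ∧ (U x).Dom ∧ haltsWithin c K x = false}).Finite :=
    (List.finite_length_le Bool (s + t)).subset fun x hx => by
      rcases hx with hx | hx
      · exact hx.1.trans (Nat.le_add_right s t)
      · exact hx.1
  have hlow := ncard_length_le_and_lt (ErrorPoint U (approxDecider c r N t)) s
  have hdom := ncard_dom_not_haltsWithin_add hc K (s + t)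
  have hunion := (Set.ncard_le_ncard hsub hfin).trans (Set.ncard_union_le _ _)
  omega

theorem errRate_approxDecider_le (hc : IsCodeFor c U) (hr : ∀ j ≥ N, (r : ℝ) ≤ haltRate U j)
    {s : ℕ} (hs : N ≤ s + t) :
    errRate U (approxDecider c r N t) (s + t) ≤ (1 / 2) ^ t + (haltRate U (s + t) - r) := by
  have hex := exists_thresholdMet (t := t) hc hr
  have hcount : ({x | x.length ≤ s + t ∧ ErrorPoint U (approxDecider c r N t) x}.ncard : ℝ)
      + numHaltsWithin c (Nat.find (hex (s + 1))) (s + t)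
      < 2 ^ (s + 1) + ({x : List Bool | x.length ≤ s + t ∧ (U x).Dom}.ncard : ℝ) := by
    exact_mod_cast ncard_errorPoint_add_lt hc hex s
  have hK := (NNRat.num_mul_le_den_mul_iff r (by positivity) _).1
    (Nat.find_spec (hex (s + 1)) (s + t) (by omega) hs)
  have hB : (0 : ℝ) < 2 ^ (s + t + 1) := by positivity
  have hpow : (2 : ℝ) ^ (s + 1) = (1 / 2) ^ t * 2 ^ (s + t + 1) := by
    rw [show s + t + 1 = s + 1 + t by omega, pow_add (2 : ℝ) (s + 1) t, mul_left_comm,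
      ← mul_pow]
    norm_num
  push_cast at hK
  rw [le_div_iff₀ hB] at hK
  rw [errRate, haltRate, div_le_iff₀ hB, add_mul, sub_mul, div_mul_cancel₀ _ hB.ne', ← hpow]
  linarith

end Counting

theorem exists_partrec_liminf_errRate_le {U : List Bool →. ℕ} (hU : Partrec U) {ε : ℝ}
    (hε : 0 < ε) : ∃ A : List Bool →. Bool, Partrec A ∧ liminf (errRate U A) atTop ≤ ε := by
  obtain ⟨c, hc⟩ := Code.exists_code.1 hU
  obtain ⟨t, ht⟩ := exists_pow_lt_of_lt_one (half_pos hε) (by norm_num : (1 / 2 : ℝ) < 1)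
  obtain ⟨r, hr, hfreq⟩ := exists_nnrat_eventually_le_frequently_lt (f := atTop)
    (haltRate_nonneg U) (isBoundedUnder_of ⟨1, haltRate_le_one U⟩) (half_pos hε)
  obtain ⟨N, hN⟩ := eventually_atTop.1 hr
  refine ⟨approxDecider c r N t, partrec_approxDecider c r N t,
    liminf_le_of_frequently_le ?_ (isBoundedUnder_of ⟨0, errRate_nonneg U _⟩)⟩
  refine (hfreq.and_eventually (eventually_ge_atTop (N + t))).mono ?_
  rintro m ⟨hm, hNm⟩
  obtain ⟨s, rfl⟩ : ∃ s, m = s + t := ⟨m - t, by omega⟩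
  linarith [errRate_approxDecider_le hc hN (by omega : N ≤ s + t)]

end ErrorRate

/-- for every rational `ε > 0` there is a partial computable `A` whose
liminf error rate is at most `ε`. -/
theorem exists_small_liminf_error_rate (U : List Bool →. ℕ) (hU : OptimalMachine U)
    (ε : ℚ) (hε : 0 < ε) :
    ∃ A : List Bool →. Bool, Partrec A ∧
      Filter.liminf (fun n => errRate U A n) Filter.atTop ≤ (ε : ℝ) :=
  ErrorRate.exists_partrec_liminf_errRate_le hU.1 (by exact_mod_cast hε)
end

section
/- Let U be an optimal machine. The sequence ρ_n(U) of halting fractions does not converge: there is no real number L such that ρ_n(U) → L as n → ∞. -/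
open Filter

/-!
If the halting fractions `ρ_m` of an optimal machine `U` converged to `L`, then for a rational
`θ` slightly below `L` we would eventually have `H_m ≥ θ 2^(m+1)`. A machine `V` that, on inputs of
length `n`, waits until `θ 2^(n+a+1)` programs of length `≤ n + a` have been seen to halt and then
outputs `2^n` values different from everything produced so far, forces, through the optimality
constant `a` of `U` against `V`, `2^n` further halting programs of length `≤ n + a`. Hence
`ρ_(n+a) ≥ θ + 2^-(a+1)` for infinitely many `n`, which is incompatible with `ρ_m → L`.
-/

open Encodable Filter Topology
open Nat.Partrec (Code)
open Nat.Partrec.Code (evaln)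

def extendStrings (l : List (List Bool)) : List (List Bool) :=
  [] :: (l.map (List.cons false) ++ l.map (List.cons true))

def stringsUpTo (m : ℕ) : List (List Bool) := extendStrings^[m] [[]]

theorem mem_stringsUpTo {m : ℕ} {p : List Bool} : p ∈ stringsUpTo m ↔ p.length ≤ m := by
  induction m generalizing p with
  | zero => simp [stringsUpTo, List.length_eq_zero_iff]
  | succ m ih =>
    rw [stringsUpTo, Function.iterate_succ_apply', ← stringsUpTo]
    rcases p with _ | ⟨b, p⟩
    · simp [extendStrings]
    · cases b <;> simp [extendStrings, ih]

theorem nodup_stringsUpTo (m : ℕ) : (stringsUpTo m).Nodup := by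
  induction m with
  | zero => simp [stringsUpTo]
  | succ m ih =>
    rw [stringsUpTo, Function.iterate_succ_apply', ← stringsUpTo, extendStrings]
    refine List.nodup_cons.2 ⟨by simp, List.nodup_append.2 ⟨ih.map List.cons_injective,
      ih.map List.cons_injective, ?_⟩⟩
    simp

theorem primrec_stringsUpTo : Primrec stringsUpTo := by
  have : Primrec₂ fun (_ : ℕ) l => extendStrings l :=
    (Primrec.list_cons.comp (Primrec.const []) (Primrec.list_append.comp
      (Primrec.list_map Primrec.snd
        (Primrec.list_cons.comp (Primrec.const false) Primrec.snd).to₂)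
      (Primrec.list_map Primrec.snd
        (Primrec.list_cons.comp (Primrec.const true) Primrec.snd).to₂))).to₂
  exact Primrec.nat_iterate Primrec.id (Primrec.const [[]]) this

theorem ncard_setOf_length_eq (n : ℕ) : {x : List Bool | x.length = n}.ncard = 2 ^ n := by
  have h : Nat.card (List.Vector Bool n) = 2 ^ n := by
    rw [Nat.card_eq_fintype_card, card_vector, Fintype.card_bool]
  rwa [← Nat.card_coe_set_eq]

theorem ncard_le_ncard_of_forall_exists_mem {α β : Type*} {f : α →. β} {W : Set β} {T : Set α}
    (hT : T.Finite) (h : ∀ w ∈ W, ∃ p ∈ T, w ∈ f p) : W.ncard ≤ T.ncard := by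
  obtain rfl | ⟨w₀, hw₀⟩ := W.eq_empty_or_nonempty
  · simp
  have : Nonempty α := ⟨(h w₀ hw₀).choose⟩
  choose! g hgT hg using h
  exact Set.ncard_le_ncard_of_injOn g hgT
    (fun w hw w' hw' he => Part.mem_unique (hg w hw) (he ▸ hg w' hw')) hT

theorem KU_le_length {U : List Bool →. ℕ} {w : ℕ} {p : List Bool} (h : w ∈ U p) :
    KU U w ≤ p.length :=
  sInf_le ⟨p, h, rfl⟩

theorem exists_mem_length_le_of_KU_le {U : List Bool →. ℕ} {w N : ℕ} (h : KU U w ≤ N) :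
    ∃ p, w ∈ U p ∧ p.length ≤ N := by
  have hne : {l : ℕ∞ | ∃ p : List Bool, w ∈ U p ∧ (p.length : ℕ∞) = l}.Nonempty := by
    by_contra hne
    simp [KU, Set.not_nonempty_iff_eq_empty.1 hne] at h
  obtain ⟨p, hp, hl⟩ := csInf_mem hne
  exact ⟨p, hp, by exact_mod_cast hl.trans_le h⟩

def outputsWithin (c : Code) (m t : ℕ) : List ℕ :=
  (stringsUpTo m).filterMap fun p => evaln t c (encode p)

def haltedWithin (c : Code) (m t : ℕ) : Set (List Bool) :=
  {p | p.length ≤ m ∧ (evaln t c (encode p)).isSome}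

theorem length_outputsWithin (c : Code) (m t : ℕ) :
    (outputsWithin c m t).length = (haltedWithin c m t).ncard := by
  classical
  rw [outputsWithin, List.length_filterMap_eq_countP, List.countP_eq_length_filter,
    ← List.toFinset_card_of_nodup ((nodup_stringsUpTo m).filter _), ← Set.ncard_coe_finset]
  congr 1
  ext p
  simp [haltedWithin, mem_stringsUpTo]

theorem le_sum_outputsWithin {c : Code} {m t w : ℕ} {p : List Bool} (hp : p.length ≤ m)
    (hw : w ∈ evaln t c (encode p)) : w ≤ (outputsWithin c m t).sum :=
  List.le_sum_of_mem (List.mem_filterMap.2 ⟨p, mem_stringsUpTo.2 hp, hw⟩)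

theorem primrec_outputsWithin (c : Code) : Primrec₂ (outputsWithin c) :=
  Primrec.listFilterMap (primrec_stringsUpTo.comp Primrec.fst)
    (Nat.Partrec.Code.primrec_evaln.comp (Primrec.pair (Primrec.pair
      (Primrec.snd.comp Primrec.fst) (Primrec.const c)) (Primrec.encode.comp Primrec.snd))).to₂

theorem exists_code_of_partrec {U : List Bool →. ℕ} (h : Partrec U) :
    ∃ c : Code, ∀ p, c.eval (encode p) = U p := by
  obtain ⟨c, hc⟩ := Nat.Partrec.Code.exists_code.1 h
  refine ⟨c, fun p => ?_⟩
  simpa [hc, encodek] using Part.map_id' Encodable.encode_nat (U p)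

def haltingSet (U : List Bool →. ℕ) (m : ℕ) : Set (List Bool) :=
  {x | x.length ≤ m ∧ (U x).Dom}

theorem haltRate_eq (U : List Bool →. ℕ) (m : ℕ) :
    haltRate U m = (haltingSet U m).ncard / 2 ^ (m + 1) := rfl

theorem haltRate_nonneg (U : List Bool →. ℕ) (m : ℕ) : 0 ≤ haltRate U m := by
  rw [haltRate_eq]
  positivity

theorem haltingSet_finite (U : List Bool →. ℕ) (m : ℕ) : (haltingSet U m).Finite :=
  (List.finite_length_le Bool m).subset fun _ h => h.1

section StageApproximation

variable {U : List Bool →. ℕ} {c : Code}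

theorem mem_of_mem_evaln (hc : ∀ p, c.eval (encode p) = U p) {t w : ℕ} {p : List Bool}
    (h : w ∈ evaln t c (encode p)) : w ∈ U p :=
  hc p ▸ Nat.Partrec.Code.evaln_sound h

theorem haltedWithin_subset_haltingSet (hc : ∀ p, c.eval (encode p) = U p) (m t : ℕ) :
    haltedWithin c m t ⊆ haltingSet U m := by
  rintro p ⟨hp, hsome⟩
  obtain ⟨w, hw⟩ := Option.isSome_iff_exists.1 hsome
  exact ⟨hp, Part.dom_iff_mem.2 ⟨w, mem_of_mem_evaln hc hw⟩⟩

theorem eventually_haltingSet_subset_haltedWithin (hc : ∀ p, c.eval (encode p) = U p) (m : ℕ) :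
    ∀ᶠ t in atTop, haltingSet U m ⊆ haltedWithin c m t := by
  refine ((haltingSet_finite U m).eventually_all.2 fun p ⟨hp, hdom⟩ => ?_).mono
    fun _ h p hp => h p hp
  obtain ⟨t, ht⟩ := Nat.Partrec.Code.evaln_complete.1 (by rw [hc]; exact Part.get_mem hdom)
  exact eventually_atTop.2 ⟨t, fun t' h' =>
    ⟨hp, Option.isSome_iff_exists.2 ⟨_, Nat.Partrec.Code.evaln_mono h' ht⟩⟩⟩

end StageApproximation

/- The machine `V` reads its parameters off the input length `n = ⟪r, ⟪a, ⟪u, d⟫⟫⟫`: the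
constant `a` (which depends on `V` itself, so cannot be built in), the threshold `θ = u / d`, and
a lower bound `r` on `n` that the machine ignores. -/
def slack (n : ℕ) : ℕ := n.unpair.2.unpair.1

def thresholdNum (n : ℕ) : ℕ := n.unpair.2.unpair.2.unpair.1

def thresholdDen (n : ℕ) : ℕ := n.unpair.2.unpair.2.unpair.2

def thresholdMet (c : Code) (n t : ℕ) : Bool :=
  thresholdNum n * 2 ^ (n + slack n + 1) ≤ (outputsWithin c (n + slack n) t).length * thresholdDen n

def jumpMachine (c : Code) (x : List Bool) : Part ℕ :=
  (Nat.rfind fun t => Part.some (thresholdMet c x.length t)).map fun t =>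
    (outputsWithin c (x.length + slack x.length) t).sum + 1 + encode x

theorem primrec_slack : Primrec slack :=
  Primrec.fst.comp (Primrec.unpair.comp (Primrec.snd.comp Primrec.unpair))

theorem primrec_thresholdNum : Primrec thresholdNum :=
  Primrec.fst.comp (Primrec.unpair.comp (Primrec.snd.comp
    (Primrec.unpair.comp (Primrec.snd.comp Primrec.unpair))))

theorem primrec_thresholdDen : Primrec thresholdDen :=
  Primrec.snd.comp (Primrec.unpair.comp (Primrec.snd.comp
    (Primrec.unpair.comp (Primrec.snd.comp Primrec.unpair))))

theorem primrec_thresholdMet (c : Code) : Primrec₂ (thresholdMet c) := by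
  have hm : Primrec fun p : ℕ × ℕ => p.1 + slack p.1 :=
    Primrec.nat_add.comp Primrec.fst (primrec_slack.comp Primrec.fst)
  have hpow : Primrec₂ ((· ^ ·) : ℕ → ℕ → ℕ) := Primrec₂.unpaired'.1 Nat.Primrec.pow
  have hlhs : Primrec fun p : ℕ × ℕ => thresholdNum p.1 * 2 ^ (p.1 + slack p.1 + 1) :=
    Primrec.nat_mul.comp (primrec_thresholdNum.comp Primrec.fst)
      (hpow.comp (Primrec.const 2) (Primrec.succ.comp hm))
  have hrhs : Primrec fun p : ℕ × ℕ =>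
      (outputsWithin c (p.1 + slack p.1) p.2).length * thresholdDen p.1 :=
    Primrec.nat_mul.comp
      (Primrec.list_length.comp ((primrec_outputsWithin c).comp hm Primrec.snd))
      (primrec_thresholdDen.comp Primrec.fst)
  exact (Primrec.nat_le.comp hlhs hrhs).decide

theorem primrec_list_sum : Primrec (List.sum : List ℕ → ℕ) :=
  (Primrec.list_foldr Primrec.id (Primrec.const 0)
    (Primrec.nat_add.comp (Primrec.fst.comp Primrec.snd) (Primrec.snd.comp Primrec.snd)).to₂).of_eq
    fun _ => List.sum_eq_foldr.symm

theorem partrec_jumpMachine (c : Code) : Partrec (jumpMachine c) := by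
  have hlen : Primrec fun p : List Bool × ℕ => p.1.length := Primrec.list_length.comp Primrec.fst
  have hm : Primrec fun p : List Bool × ℕ => p.1.length + slack p.1.length :=
    Primrec.nat_add.comp hlen (primrec_slack.comp hlen)
  have hout : Primrec fun p : List Bool × ℕ =>
      (outputsWithin c (p.1.length + slack p.1.length) p.2).sum + 1 + encode p.1 :=
    Primrec.nat_add.comp
      (Primrec.succ.comp (primrec_list_sum.comp ((primrec_outputsWithin c).comp hm Primrec.snd)))
      (Primrec.encode.comp Primrec.fst)
  have hmet : Primrec fun p : List Bool × ℕ => thresholdMet c p.1.length p.2 :=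
    (primrec_thresholdMet c).comp hlen Primrec.snd
  exact (Partrec.rfind hmet.to_comp.partrec.to₂).map hout.to_comp.to₂

theorem mem_jumpMachine {c : Code} {x : List Bool} {t : ℕ}
    (ht : t ∈ Nat.rfind fun t => Part.some (thresholdMet c x.length t)) :
    (outputsWithin c (x.length + slack x.length) t).sum + 1 + encode x ∈ jumpMachine c x :=
  Part.mem_map _ ht

section Counting

variable {U : List Bool →. ℕ} {c : Code} {a : ℕ}

theorem length_outputsWithin_add_pow_le (hc : ∀ p, c.eval (encode p) = U p)
    (hopt : ∀ w, KU U w ≤ KU (jumpMachine c) w + a) {n t : ℕ} (ha : slack n = a)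
    (ht : t ∈ Nat.rfind fun t => Part.some (thresholdMet c n t)) :
    (outputsWithin c (n + a) t).length + 2 ^ n ≤ (haltingSet U (n + a)).ncard := by
  set fresh := (outputsWithin c (n + a) t).sum + 1
  have hprog : ∀ x : List Bool, x.length = n →
      ∃ p ∈ haltingSet U (n + a) \ haltedWithin c (n + a) t, fresh + encode x ∈ U p := by
    rintro x rfl
    have hV := mem_jumpMachine ht
    rw [ha] at hV
    obtain ⟨p, hp, hlen⟩ := exists_mem_length_le_of_KU_le (U := U) (w := fresh + encode x)
      (N := x.length + a) <| calc
        KU U _ ≤ KU (jumpMachine c) _ + a := hopt _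
        _ ≤ x.length + a := by gcongr; exact KU_le_length hV
        _ = _ := by push_cast; rfl
    refine ⟨p, ⟨⟨hlen, Part.dom_iff_mem.2 ⟨_, hp⟩⟩, fun ⟨hlen', hsome⟩ => ?_⟩, hp⟩
    obtain ⟨w, hw⟩ := Option.isSome_iff_exists.1 hsome
    have hw_eq : w = fresh + encode x := Part.mem_unique (mem_of_mem_evaln hc hw) hp
    have hw_le := le_sum_outputsWithin hlen' hw
    omega
  have hfresh : Function.Injective fun x : List Bool => fresh + encode x :=
    fun x y h => encode_injective (by simpa using h)
  calc (outputsWithin c (n + a) t).length + 2 ^ n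
      = (haltedWithin c (n + a) t).ncard +
          ((fun x : List Bool => fresh + encode x) '' {x | x.length = n}).ncard := by
        rw [length_outputsWithin, Set.ncard_image_of_injective _ hfresh, ncard_setOf_length_eq]
    _ ≤ (haltedWithin c (n + a) t).ncard +
          (haltingSet U (n + a) \ haltedWithin c (n + a) t).ncard := by
        gcongr
        exact ncard_le_ncard_of_forall_exists_mem (haltingSet_finite U _).sdiff
          (by rintro _ ⟨x, hx, rfl⟩; exact hprog x hx)
    _ = (haltingSet U (n + a)).ncard := by
        rw [add_comm, Set.ncard_sdiff_add_ncard_of_subset (haltedWithin_subset_haltingSet hc _ _)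
          (haltingSet_finite U _)]

theorem add_pow_mul_le_of_threshold (hc : ∀ p, c.eval (encode p) = U p)
    (hopt : ∀ w, KU U w ≤ KU (jumpMachine c) w + a) {n : ℕ} (ha : slack n = a)
    (h : thresholdNum n * 2 ^ (n + a + 1) ≤ (haltingSet U (n + a)).ncard * thresholdDen n) :
    thresholdNum n * 2 ^ (n + a + 1) + 2 ^ n * thresholdDen n ≤
      (haltingSet U (n + a)).ncard * thresholdDen n := by
  obtain ⟨t₁, ht₁⟩ := (eventually_haltingSet_subset_haltedWithin hc (n + a)).exists
  have hmet₁ : thresholdMet c n t₁ := by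
    rw [thresholdMet, ha, decide_eq_true_eq, length_outputsWithin]
    exact h.trans (Nat.mul_le_mul_right _ (Set.ncard_le_ncard ht₁
      ((List.finite_length_le Bool _).subset fun _ hp => hp.1)))
  have hdom : (Nat.rfind fun t => Part.some (thresholdMet c n t)).Dom :=
    Nat.rfind_dom'.2 ⟨t₁, by simpa using hmet₁, fun _ => trivial⟩
  obtain ⟨t₀, ht₀⟩ := Part.dom_iff_mem.1 hdom
  have hmet₀ := Nat.rfind_spec ht₀
  have hcount := length_outputsWithin_add_pow_le hc hopt ha ht₀
  simp only [Part.mem_some_iff, thresholdMet, ha, eq_comm (a := true), decide_eq_true_eq] at hmet₀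
  calc thresholdNum n * 2 ^ (n + a + 1) + 2 ^ n * thresholdDen n
      ≤ ((outputsWithin c (n + a) t₀).length + 2 ^ n) * thresholdDen n := by
        rw [add_mul, mul_comm (2 ^ n)]; gcongr
    _ ≤ (haltingSet U (n + a)).ncard * thresholdDen n := by gcongr

theorem add_inv_pow_le_haltRate_of_le (hc : ∀ p, c.eval (encode p) = U p)
    (hopt : ∀ w, KU U w ≤ KU (jumpMachine c) w + a) {q : ℚ≥0} {n : ℕ} (ha : slack n = a)
    (hnum : thresholdNum n = q.num) (hden : thresholdDen n = q.den)
    (hq : (q : ℝ) ≤ haltRate U (n + a)) :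
    (q : ℝ) + 1 / 2 ^ (a + 1) ≤ haltRate U (n + a) := by
  rw [haltRate_eq] at hq ⊢
  have hjump := add_pow_mul_le_of_threshold hc hopt ha (by
    rw [hnum, hden]
    rw [NNRat.cast_def, div_le_div_iff₀ (by positivity) (by positivity)] at hq
    exact_mod_cast hq)
  rw [hnum, hden] at hjump
  have hd : (0 : ℝ) < q.den := by positivity
  have hmul : (q : ℝ) * 2 ^ (n + a + 1) + 2 ^ n ≤ (haltingSet U (n + a)).ncard := by
    rw [NNRat.cast_def, div_mul_eq_mul_div, div_add' _ _ _ hd.ne', div_le_iff₀ hd]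
    exact_mod_cast hjump
  rw [le_div_iff₀ (by positivity)]
  refine le_of_eq_of_le ?_ hmul
  rw [add_mul, add_assoc n, pow_add _ n]
  field_simp

end Counting

theorem OptimalMachine.exists_haltRate_jump {U : List Bool →. ℕ} (hU : OptimalMachine U) :
    ∃ ε > 0, ∀ q : ℚ≥0, (∀ᶠ m in atTop, (q : ℝ) ≤ haltRate U m) →
      ∃ᶠ m in atTop, (q : ℝ) + ε ≤ haltRate U m := by
  obtain ⟨c, hc⟩ := exists_code_of_partrec hU.1
  obtain ⟨a, hopt⟩ := hU.2 _ (partrec_jumpMachine c)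
  refine ⟨1 / 2 ^ (a + 1), by positivity, fun q hq => frequently_atTop.2 fun r => ?_⟩
  obtain ⟨r', hr'⟩ := eventually_atTop.1 hq
  set n := Nat.pair (max r r') (Nat.pair a (Nat.pair q.num q.den))
  have hn : max r r' ≤ n := Nat.left_le_pair _ _
  exact ⟨n + a, by omega, add_inv_pow_le_haltRate_of_le hc hopt (by simp [n, slack])
    (by simp [n, thresholdNum]) (by simp [n, thresholdDen]) (hr' _ (by omega))⟩

theorem not_tendsto_of_frequently_add_le {s : ℕ → ℝ} (hs : ∀ m, 0 ≤ s m) {ε : ℝ} (hε : 0 < ε)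
    (hjump : ∀ q : ℚ≥0, (∀ᶠ m in atTop, (q : ℝ) ≤ s m) → ∃ᶠ m in atTop, (q : ℝ) + ε ≤ s m)
    (L : ℝ) : ¬ Tendsto s atTop (𝓝 L) := by
  intro hL
  obtain ⟨q, hq₁, hq₂⟩ := exists_rat_btwn (show L - ε / 2 < L by linarith)
  have hq : ((q.toNNRat : ℚ≥0) : ℝ) = max (q : ℝ) 0 := by
    rw [← Rat.cast_nnratCast]
    simp [Rat.toNNRat]
  have hlow : ∀ᶠ m in atTop, ((q.toNNRat : ℚ≥0) : ℝ) ≤ s m :=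
    (hL.eventually (lt_mem_nhds hq₂)).mono fun m hm => hq ▸ max_le hm.le (hs m)
  have hup : ∀ᶠ m in atTop, s m < L + ε / 2 := hL.eventually (gt_mem_nhds (by linarith))
  obtain ⟨m, hm₁, hm₂⟩ := ((hjump _ hlow).and_eventually hup).exists
  have := le_max_left (q : ℝ) 0
  linarith

/-- the sequence of halting fractions of an optimal machine does not converge. -/
theorem haltRate_not_convergent (U : List Bool →. ℕ) (hU : OptimalMachine U) :
    ¬ ∃ L : ℝ, Filter.Tendsto (fun n => haltRate U n) Filter.atTop (nhds L) := by
  obtain ⟨ε, hε, hjump⟩ := hU.exists_haltRate_jump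
  rintro ⟨L, hL⟩
  exact not_tendsto_of_frequently_add_le (haltRate_nonneg U) hε hjump L hL
end
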